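/- Let f : ℝ^n \ {0} → ℝ (n ≥ 2) be a C¹ function positively homogeneous of degree 0, and let A^c_d be a fixed n×n matrix of real constants. If the function φ(ẋ) = A^c_d ẋ^d ∂_c f(ẋ) is constant on ℝ^n \ {0}, then φ ≡ 0. -/

import Mathlib

noncomputable def pd {n : ℕ} (f : (Fin n → ℝ) → ℝ) (a : Fin n) (x : Fin n → ℝ) : ℝ :=
  fderiv ℝ f x (Pi.single a 1)

/-- If `φ(ẋ) = A^c_d ẋ^d ∂_c f(ẋ)` is constant on `ℝ^n \ {0}` for a C¹
positively 0-homogeneous `f`, then `φ ≡ 0`. -/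
theorem stmt7 {n : ℕ} (hn : 2 ≤ n) (f : (Fin n → ℝ) → ℝ)
    (hf : ContDiffOn ℝ 1 f {x | x ≠ 0})
    (hhom : ∀ lam : ℝ, 0 < lam → ∀ x : Fin n → ℝ, x ≠ 0 → f (lam • x) = f x)
    (A : Matrix (Fin n) (Fin n) ℝ)
    (φ : (Fin n → ℝ) → ℝ)
    (hφ : ∀ x, φ x = ∑ c, ∑ d, A c d * x d * pd f c x)
    (hconst : ∀ x y : Fin n → ℝ, x ≠ 0 → y ≠ 0 → φ x = φ y) :
    ∀ x : Fin n → ℝ, x ≠ 0 → φ x = 0 := by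
  have hopen : IsOpen {x : Fin n → ℝ | x ≠ 0} := isOpen_compl_singleton
  have hsub : Metric.sphere (0 : Fin n → ℝ) 1 ⊆ {x | x ≠ 0} := by
    intro y hy
    simp only [Metric.mem_sphere, dist_zero_right] at hy
    intro h
    rw [h] at hy
    simp at hy
  have hne : (Metric.sphere (0 : Fin n → ℝ) 1).Nonempty := by
    refine ⟨Pi.single ⟨0, by omega⟩ 1, ?_⟩
    simp only [Metric.mem_sphere, dist_zero_right]
    rw [Pi.norm_single]
    norm_num
  obtain ⟨x₀, hx₀s, hx₀max⟩ :=
    (isCompact_sphere (0 : Fin n → ℝ) 1).exists_isMaxOn hne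
      (hf.continuousOn.mono hsub)
  have hx₀ : x₀ ≠ 0 := hsub hx₀s
  have hglob : ∀ y : Fin n → ℝ, y ≠ 0 → f y ≤ f x₀ := by
    intro y hy
    have hny : (0 : ℝ) < ‖y‖ := norm_pos_iff.mpr hy
    have hmem : (‖y‖⁻¹ • y) ∈ Metric.sphere (0 : Fin n → ℝ) 1 := by
      simp [norm_smul, abs_of_pos (inv_pos.mpr hny), inv_mul_cancel₀ hny.ne']
    have h2 : f (‖y‖⁻¹ • y) ≤ f x₀ := hx₀max hmem
    rwa [hhom _ (inv_pos.mpr hny) y hy] at h2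
  have hdiff : DifferentiableAt ℝ f x₀ :=
    (hf.contDiffAt (hopen.mem_nhds hx₀)).differentiableAt one_ne_zero
  have hloc : IsLocalMax f x₀ := by
    filter_upwards [hopen.mem_nhds hx₀] with y hy
    exact hglob y hy
  have hderiv : fderiv ℝ f x₀ = 0 := hloc.fderiv_eq_zero
  have hφ0 : φ x₀ = 0 := by
    rw [hφ]
    refine Finset.sum_eq_zero fun c _ => Finset.sum_eq_zero fun d _ => ?_
    simp [pd, hderiv]
  intro x hx
  rw [hconst x x₀ hx hx₀, hφ0]
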